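/- arXiv:0808.1829 — 2 statements merged into one kernel-verified Lean document; each statement's English description precedes it below -/
import Mathlib

section
/- For m ≥ 1 and real x with 0 ≤ x < 1, the Euler polynomial satisfies E_m(x) = 2·m! · ∑_{n=-∞}^{∞} e^{(2n+1)πix}/((2n+1)πi)^{m+1}. -/
open scoped BigOperators Nat
open PowerSeries Real Complex

/-- The Euler numbers, defined by the generating function `2 / (e^t + 1)`. -/
noncomputable def eulerNumber (n : ℕ) : ℝ :=
  (n ! : ℝ) * PowerSeries.coeff n (2 * (PowerSeries.exp ℝ + 1)⁻¹)

/-- The Euler polynomials, defined by the generating function `(2 / (e^t + 1)) * e^{x t}`. -/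
noncomputable def eulerPoly (n : ℕ) (x : ℝ) : ℝ :=
  (n ! : ℝ) * PowerSeries.coeff n
    (2 * (PowerSeries.exp ℝ + 1)⁻¹ * PowerSeries.rescale x (PowerSeries.exp ℝ))

/-- Stirling numbers of the second kind. -/
def stirling2 : ℕ → ℕ → ℕ
  | 0, 0 => 1
  | 0, _ + 1 => 0
  | _ + 1, 0 => 0
  | m + 1, n + 1 => (n + 1) * stirling2 m (n + 1) + stirling2 m n


/-
Proof. The identity `2 / (e^t + 1) = 2 / (e^t - 1) - 4 / (e^{2t} - 1)` of generating functions gives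
`E_m(x) = 2 (B_{m+1}(x) - 2^{m+1} B_{m+1}(x/2)) / (m + 1)`. For `k ≥ 2` and `0 ≤ x ≤ 1`,
`B_k(x) = -(k! / (2πi)^k) ∑_{n ≠ 0} e^{2πinx} / n^k`; in this series at `x/2` the even-indexed terms
add up to `2^{-k}` times the series at `x`, so the odd-indexed terms, which are the terms of the
theorem up to the factor `(πi)^k`, add up to an explicit combination of `B_k(x)` and `B_k(x/2)`.
-/

theorem HasSum.int_odd_of_even {α : Type*} [AddCommGroup α] [TopologicalSpace α]
    [IsTopologicalAddGroup α] {f : ℤ → α} {a b : α} (hf : HasSum f a)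
    (he : HasSum (fun n ↦ f (2 * n)) b) : HasSum (fun n ↦ f (2 * n + 1)) (a - b) := by
  have h2 : Function.Injective (fun n : ℤ ↦ 2 * n) := mul_right_injective₀ two_ne_zero
  have h21 : Function.Injective (fun n : ℤ ↦ 2 * n + 1) := (add_left_injective 1).comp h2
  have hodd := (h2.hasSum_range_iff (f := f) |>.2 he).hasSum_iff_compl.1 hf
  rw [range_two_mul, Int.isCompl_even_odd.compl_eq, ← range_two_mul_add_one] at hodd
  exact h21.hasSum_range_iff.1 hodd

theorem bernoulliFun_generating_function (x : ℝ) :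
    (mk fun n ↦ bernoulliFun n x / n !) * (PowerSeries.exp ℝ - 1) =
      X * rescale x (PowerSeries.exp ℝ) := by
  convert Polynomial.bernoulli_generating_function x using 3
  ext n
  simp [bernoulliFun, Polynomial.eval_map, ← Polynomial.aeval_def, div_eq_inv_mul, Rat.smul_def]

theorem X_mul_eulerPoly_generating_function (x : ℝ) :
    X * (2 * (PowerSeries.exp ℝ + 1)⁻¹ * rescale x (PowerSeries.exp ℝ)) =
      2 * ((mk fun n ↦ bernoulliFun n x / n !) -
        rescale 2 (mk fun n ↦ bernoulliFun n (x / 2) / n !)) := by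
  set e := PowerSeries.exp ℝ
  have hee : rescale (2 : ℝ) e = e * e := by
    simpa [one_add_one_eq_two] using (exp_mul_exp_eq_exp_add (1 : ℝ) 1).symm
  have hx := bernoulliFun_generating_function x
  have hx2 := congrArg (rescale (2 : ℝ)) (bernoulliFun_generating_function (x / 2))
  rw [map_mul, map_sub, map_one, map_mul, rescale_X, rescale_rescale,
    div_mul_cancel₀ x two_ne_zero, map_ofNat, hee] at hx2
  have hinv : (e + 1)⁻¹ * (e + 1) = 1 := PowerSeries.inv_mul_cancel _ (by simp [e])
  have hne : (e - 1) * (e + 1) ≠ 0 := by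
    refine mul_ne_zero (fun h ↦ ?_) (fun h ↦ ?_)
    · simpa [e] using congrArg (coeff 1) h
    · simpa [e] using congrArg constantCoeff h
  refine mul_right_cancel₀ hne ?_
  linear_combination (2 * X * rescale x e * (e - 1)) * hinv - 2 * (e + 1) * hx + 2 * hx2

theorem eulerPoly_eq_bernoulliFun (m : ℕ) (x : ℝ) :
    eulerPoly m x =
      2 / (m + 1) * (bernoulliFun (m + 1) x - 2 ^ (m + 1) * bernoulliFun (m + 1) (x / 2)) := by
  have h := congrArg (coeff (m + 1)) (X_mul_eulerPoly_generating_function x)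
  rw [coeff_succ_X_mul, ← map_ofNat C, coeff_C_mul, map_sub, coeff_rescale, coeff_mk, coeff_mk,
    map_ofNat] at h
  rw [eulerPoly, h, Nat.factorial_succ]
  push_cast
  field_simp

theorem fourier_coe_unitAddCircle (n : ℤ) (x : ℝ) :
    fourier n (x : UnitAddCircle) = cexp (2 * π * I * n * x) := by
  rw [fourier_coe_apply, ofReal_one, div_one]

theorem hasSum_cexp_odd_div_pow {k : ℕ} (hk : 2 ≤ k) {x : ℝ} (hx : x ∈ Set.Icc 0 1) :
    HasSum (fun n : ℤ ↦ cexp ((2 * n + 1) * π * I * x) / ((2 * n + 1) * π * I) ^ k)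
      ((bernoulliFun k x - 2 ^ k * bernoulliFun k (x / 2)) / k !) := by
  have hhalf := hasSum_one_div_pow_mul_fourier_mul_bernoulliFun hk
    (x := x / 2) ⟨by linarith [hx.1], by linarith [hx.2]⟩
  have heven : HasSum
      (fun n : ℤ ↦ 1 / ((2 * n : ℤ) : ℂ) ^ k * fourier (2 * n) ((x / 2 : ℝ) : UnitAddCircle))
      (-(2 * π * I) ^ k / k ! * bernoulliFun k x / 2 ^ k) := by
    refine ((hasSum_one_div_pow_mul_fourier_mul_bernoulliFun hk hx).div_const _).congr_fun
      fun n ↦ ?_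
    simp only [fourier_coe_unitAddCircle]
    push_cast
    rw [show 2 * π * I * (2 * n) * (x / 2 : ℂ) = 2 * π * I * n * x by ring, mul_pow]
    ring
  have hπI : (π : ℂ) * I ≠ 0 := mul_ne_zero (ofReal_ne_zero.2 pi_ne_zero) I_ne_zero
  have hterm (n : ℤ) :
      1 / ((2 * n + 1 : ℤ) : ℂ) ^ k * fourier (2 * n + 1) ((x / 2 : ℝ) : UnitAddCircle) / (π * I) ^ k
        = cexp ((2 * n + 1) * π * I * x) / ((2 * n + 1) * π * I) ^ k := by
    simp only [fourier_coe_unitAddCircle]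
    push_cast
    rw [show 2 * π * I * (2 * n + 1) * (x / 2 : ℂ) = (2 * n + 1) * π * I * x by ring]
    simp only [mul_pow]
    ring
  have hsum : (-(2 * π * I) ^ k / k ! * bernoulliFun k (x / 2) -
      -(2 * π * I) ^ k / k ! * bernoulliFun k x / 2 ^ k) / (π * I) ^ k
      = (bernoulliFun k x - 2 ^ k * bernoulliFun k (x / 2)) / k ! := by
    rw [mul_assoc 2, mul_pow 2]
    field_simp
    ring
  rw [← hsum]
  exact ((hhalf.int_odd_of_even heven).div_const _).congr_fun fun n ↦ (hterm n).symm

theorem euler_poly_fourier_series (m : ℕ) (hm : 1 ≤ m) (x : ℝ) (hx0 : 0 ≤ x) (hx1 : x < 1) :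
    (eulerPoly m x : ℂ) = 2 * (m ! : ℂ) *
      ∑' n : ℤ, Complex.exp ((2 * n + 1) * π * Complex.I * x) / ((2 * n + 1) * π * Complex.I) ^ (m + 1) := by
  rw [(hasSum_cexp_odd_div_pow (by omega) ⟨hx0, hx1.le⟩).tsum_eq, eulerPoly_eq_bernoulliFun,
    Nat.factorial_succ]
  have hfact : (m ! : ℂ) ≠ 0 := Nat.cast_ne_zero.2 m.factorial_ne_zero
  push_cast
  field_simp
end

section
/- For m ≥ 1, the Euler number satisfies E_m = 2·m! · ∑_{n=-∞}^{∞} 1/((2n+1)πi)^{m+1}, the sum ranging over all integers n. -/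
open scoped BigOperators Nat
open PowerSeries Real Complex

/-! Multiplying `2 / (e^t + 1)` by `t` gives `B(t) - B(2t)`, where `B(t) = t / (e^t - 1)` generates
the Bernoulli numbers, so `E_m = 2 (1 - 2^(m+1)) B_(m+1) / (m+1)`. On the other side, removing the
even terms from `ζ(p)` gives `∑_{n ≥ 0} (2n+1)^(-p) = (1 - 2^(-p)) ζ(p)`, and Euler's evaluation of
`ζ(2k)` turns the bilateral sum into the same Bernoulli expression. For odd `p` both sides vanish:
`n ↦ -1 - n` changes the sign of every term, and `B_p = 0`. -/

section PowerSeries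

variable {K : Type*} [Field K] [CharZero K]

theorem bernoulliPowerSeries_sub_rescale_two_mul_exp_add_one :
    (bernoulliPowerSeries K - rescale 2 (bernoulliPowerSeries K)) * (exp K + 1) = X := by
  have hB := bernoulliPowerSeries_mul_exp_sub_one K
  have hB2 : rescale (2 : K) (bernoulliPowerSeries K) * (exp K ^ 2 - 1) = 2 * X := by
    simpa [exp_pow_eq_rescale_exp, rescale_X, map_ofNat] using congrArg (rescale (2 : K)) hB
  have hne : exp K - 1 ≠ 0 := fun h ↦ by simpa [coeff_exp] using congrArg (coeff 1) h
  refine mul_right_cancel₀ hne ?_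
  linear_combination (exp K + 1) * hB - hB2

theorem coeff_two_mul_inv_exp_add_one (m : ℕ) :
    coeff m (2 * (exp K + 1)⁻¹) = (2 * (1 - 2 ^ (m + 1)) * bernoulli (m + 1) / (m + 1)! : K) := by
  have hunit : constantCoeff (exp K + 1) ≠ 0 := by simp [constantCoeff_exp]
  have hX : X * (2 * (exp K + 1)⁻¹) =
      2 * (bernoulliPowerSeries K - rescale 2 (bernoulliPowerSeries K)) := by
    rw [← bernoulliPowerSeries_sub_rescale_two_mul_exp_add_one, mul_left_comm,
      mul_assoc, PowerSeries.mul_inv_cancel _ hunit, mul_one, mul_comm]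
  have hcoeff := congrArg (coeff (m + 1)) hX
  simp only [coeff_succ_X_mul, ← map_ofNat (C (R := K)), coeff_C_mul, map_sub, coeff_rescale,
    bernoulliPowerSeries, coeff_mk] at hcoeff
  rw [← map_ofNat (C (R := K)), coeff_C_mul, hcoeff, map_div₀, eq_ratCast, map_natCast]
  ring

end PowerSeries

theorem Complex.summable_one_div_nat_pow {p : ℕ} (hp : 1 < p) :
    Summable (fun n : ℕ ↦ 1 / (n : ℂ) ^ p) := by
  have := Complex.summable_one_div_nat_cpow (p := (p : ℂ))
  simp only [cpow_natCast, natCast_re, Nat.one_lt_cast] at this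
  exact this.mpr hp

theorem summable_one_div_two_mul_add_one_pow {p : ℕ} (hp : 1 < p) :
    Summable (fun n : ℕ ↦ 1 / (2 * n + 1 : ℂ) ^ p) := by
  have hinj : Function.Injective (fun n : ℕ ↦ 2 * n + 1) := fun a b h ↦ by simpa using h
  exact_mod_cast (Complex.summable_one_div_nat_pow hp).comp_injective hinj

theorem tsum_one_div_two_mul_add_one_pow {p : ℕ} (hp : 1 < p) :
    ∑' n : ℕ, 1 / (2 * n + 1 : ℂ) ^ p = (1 - (2 ^ p)⁻¹) * riemannZeta p := by
  have heven : (fun k : ℕ ↦ 1 / ((2 * k : ℕ) : ℂ) ^ p) =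
      fun k : ℕ ↦ (2 ^ p)⁻¹ * (1 / (k : ℂ) ^ p) := by
    ext k; push_cast; rw [mul_pow]; field_simp
  have hsplit := tsum_even_add_odd (f := fun n : ℕ ↦ 1 / (n : ℂ) ^ p)
    (by rw [heven]; exact (Complex.summable_one_div_nat_pow hp).mul_left _)
    (by exact_mod_cast summable_one_div_two_mul_add_one_pow hp)
  rw [heven, tsum_mul_left, ← zeta_nat_eq_tsum_of_gt_one hp] at hsplit
  push_cast at hsplit
  linear_combination hsplit

theorem tsum_int_one_div_two_mul_add_one_pow_of_odd {p : ℕ} (hp : Odd p) :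
    ∑' n : ℤ, 1 / (2 * n + 1 : ℂ) ^ p = 0 := by
  have hreflect := (Equiv.subLeft (-1 : ℤ)).tsum_eq fun n : ℤ ↦ 1 / (2 * n + 1 : ℂ) ^ p
  have hodd (n : ℤ) : 1 / (2 * ((-1 - n : ℤ) : ℂ) + 1) ^ p = -(1 / (2 * n + 1 : ℂ) ^ p) := by
    rw [show 2 * ((-1 - n : ℤ) : ℂ) + 1 = -(2 * n + 1) by push_cast; ring, hp.neg_pow, div_neg]
  simp only [Equiv.subLeft_apply, hodd, tsum_neg] at hreflect
  linear_combination -hreflect / 2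

theorem tsum_int_one_div_two_mul_add_one_pow_of_even {p : ℕ} (hp : Even p) (hp1 : 1 < p) :
    ∑' n : ℤ, 1 / (2 * n + 1 : ℂ) ^ p = 2 * ∑' n : ℕ, 1 / (2 * n + 1 : ℂ) ^ p := by
  have hs := summable_one_div_two_mul_add_one_pow hp1
  have hneg (n : ℕ) : 1 / (2 * ((-(n + 1) : ℤ) : ℂ) + 1) ^ p = 1 / (2 * n + 1 : ℂ) ^ p := by
    rw [show 2 * ((-(n + 1) : ℤ) : ℂ) + 1 = -(2 * n + 1) by push_cast; ring, hp.neg_pow]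
  rw [tsum_of_nat_of_neg_add_one (by simpa only [Int.cast_natCast] using hs)
    (by simpa only [hneg] using hs)]
  simp only [hneg, Int.cast_natCast]
  ring

theorem tsum_int_one_div_two_mul_add_one_pow {p : ℕ} (hp : 2 ≤ p) :
    ∑' n : ℤ, 1 / (2 * n + 1 : ℂ) ^ p = (1 - 2 ^ p) * bernoulli p * (π * I) ^ p / p ! := by
  obtain ⟨k, rfl | rfl⟩ := Nat.even_or_odd' p
  · obtain ⟨j, rfl⟩ : ∃ j, k = j + 1 := Nat.exists_eq_add_one.mpr (by omega)
    rw [tsum_int_one_div_two_mul_add_one_pow_of_even (even_two_mul _) (by omega),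
      tsum_one_div_two_mul_add_one_pow (by omega),
      show ((2 * (j + 1) : ℕ) : ℂ) = 2 * ((j + 1 : ℕ) : ℂ) by push_cast; ring,
      riemannZeta_two_mul_nat (by omega), show 2 * (j + 1) - 1 = 2 * j + 1 by omega,
      mul_pow, pow_mul I, I_sq]
    field_simp
    ring
  · rw [tsum_int_one_div_two_mul_add_one_pow_of_odd (odd_two_mul_add_one k),
      bernoulli_eq_zero_of_odd (odd_two_mul_add_one k) (by omega)]
    simp

theorem euler_number_series (m : ℕ) (hm : 1 ≤ m) :
    (eulerNumber m : ℂ) = 2 * (m ! : ℂ) *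
      ∑' n : ℤ, 1 / ((2 * n + 1) * π * Complex.I) ^ (m + 1) := by
  have hπI : (π * I : ℂ) ≠ 0 := mul_ne_zero (ofReal_ne_zero.mpr pi_ne_zero) I_ne_zero
  have hsum : ∑' n : ℤ, 1 / ((2 * n + 1) * π * I) ^ (m + 1)
      = (∑' n : ℤ, 1 / (2 * n + 1 : ℂ) ^ (m + 1)) / (π * I) ^ (m + 1) := by
    rw [← tsum_div_const]
    simp only [mul_assoc, mul_pow, div_div]
  rw [eulerNumber, coeff_two_mul_inv_exp_add_one, hsum,
    tsum_int_one_div_two_mul_add_one_pow (by omega), Nat.factorial_succ]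
  push_cast
  field_simp
end
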